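/- Let Σ be a real symmetric positive definite 2n×2n matrix (n = n_A + n_B) with diagonal blocks Σ_AA (2n_A×2n_A) and Σ_BB (2n_B×2n_B), and suppose there exist S_A ∈ Sp(n_A) and S_B ∈ Sp(n_B) such that Σ − (ħ/2)((S_Aᵀ S_A)⁻¹ ⊕ (S_Bᵀ S_B)⁻¹) is positive semidefinite (this holds whenever the Gaussian state with covariance matrix Σ is separable). Then {z_A ∈ ℝ^{2n_A} : ⟨S_Aᵀ S_A z_A, z_A⟩ ≤ ħ} ⊆ Ω_A := {z_A : ⟨Σ_AA⁻¹ z_A, z_A⟩ ≤ 2} and {z_B ∈ ℝ^{2n_B} : ⟨S_Bᵀ S_B z_B, z_B⟩ ≤ ħ} ⊆ Ω_B := {z_B : ⟨Σ_BB⁻¹ z_B, z_B⟩ ≤ 2}; that is, the covariance ellipsoids Ω_A and Ω_B of the reduced states each contain a symplectic ball T(B^{2m}(√ħ)) with T = S_A⁻¹ ∈ Sp(n_A), respectively T = S_B⁻¹ ∈ Sp(n_B). -/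

import Mathlib

open Matrix
open scoped ComplexOrder

noncomputable section

/-- The phase space index type for `ℝ^{2m}`, split as positions ⊕ momenta. -/
abbrev PS (m : ℕ) := Fin m ⊕ Fin m

/-- The standard symplectic matrix `J_m = [[0, I_m], [-I_m, 0]]`. -/
def symplJ (m : ℕ) : Matrix (PS m) (PS m) ℝ := Matrix.fromBlocks 0 1 (-1) 0

/-- `S ∈ Sp(m)`: `Sᵀ J_m S = J_m`. -/
def IsSymplectic {m : ℕ} (S : Matrix (PS m) (PS m) ℝ) : Prop :=
  Sᵀ * symplJ m * S = symplJ m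

/-- The quantum condition `Σ + (i·hbar/2) J_m ≥ 0`, i.e. the complex Hermitian matrix
`Σ + (i·hbar/2) J_m` is positive semidefinite. -/
def QuantumCond (m : ℕ) (hbar : ℝ) (Sig : Matrix (PS m) (PS m) ℝ) : Prop :=
  (Sig.map Complex.ofReal + (hbar / 2 : ℝ) • Complex.I • (symplJ m).map Complex.ofReal).PosSemidef

/-- `μ ∈ ℂ` is an eigenvalue of the real matrix `N` (viewed as a complex matrix). -/
def IsEigenvalue {ι : Type} [Fintype ι] [DecidableEq ι] (N : Matrix ι ι ℝ) (μ : ℂ) : Prop :=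
  (N.map Complex.ofReal - μ • 1).det = 0

/-! ### Auxiliary lemmas -/

lemma symm_dot {ι : Type*} [Fintype ι] {M : Matrix ι ι ℝ} (hM : Mᵀ = M) (a b : ι → ℝ) :
    (M *ᵥ a) ⬝ᵥ b = (M *ᵥ b) ⬝ᵥ a := by
  rw [dotProduct_comm, Matrix.dotProduct_mulVec, ← Matrix.mulVec_transpose, hM]

lemma herm_toSymm {ι : Type*} [Fintype ι] {M : Matrix ι ι ℝ} (hM : M.IsHermitian) : Mᵀ = M := by
  simpa [Matrix.conjTranspose_eq_transpose_of_trivial] using hM.eq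

/-- Cauchy–Schwarz for a PSD bilinear form. -/
lemma cs_psd {ι : Type*} [Fintype ι] {M : Matrix ι ι ℝ} (hM : M.PosSemidef) (u v : ι → ℝ) :
    ((M *ᵥ u) ⬝ᵥ v) ^ 2 ≤ ((M *ᵥ u) ⬝ᵥ u) * ((M *ᵥ v) ⬝ᵥ v) := by
  have hs := symm_dot (herm_toSymm hM.1)
  have key : ∀ t : ℝ, 0 ≤ ((M *ᵥ v) ⬝ᵥ v) * (t * t) + (2 * ((M *ᵥ u) ⬝ᵥ v)) * t
      + ((M *ᵥ u) ⬝ᵥ u) := by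
    intro t
    have h0 := hM.dotProduct_mulVec_nonneg (u + t • v)
    have hst : star (u + t • v) = u + t • v := by simp
    rw [hst] at h0
    have hexp : (u + t • v) ⬝ᵥ (M *ᵥ (u + t • v))
        = ((M *ᵥ v) ⬝ᵥ v) * (t * t) + (2 * ((M *ᵥ u) ⬝ᵥ v)) * t + ((M *ᵥ u) ⬝ᵥ u) := by
      simp only [Matrix.mulVec_add, Matrix.mulVec_smul, dotProduct_add, add_dotProduct,
        dotProduct_smul, smul_dotProduct, smul_eq_mul]
      rw [dotProduct_comm u (M *ᵥ u), dotProduct_comm u (M *ᵥ v),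
        dotProduct_comm v (M *ᵥ u), dotProduct_comm v (M *ᵥ v), hs v u]
      ring
    rw [hexp] at h0
    exact h0
  have hd := discrim_le_zero key
  rw [discrim] at hd
  nlinarith [hd]

/-- The main scalar estimate: if `S ⪰ (ħ/2) M⁻¹` with `M, S` positive definite,
then `⟨M z, z⟩ ≤ ħ` implies `⟨S⁻¹ z, z⟩ ≤ 2`. -/
lemma key_est {ι : Type*} [Fintype ι] [DecidableEq ι] {hbar : ℝ} (hhb : 0 < hbar)
    {M S : Matrix ι ι ℝ} (hM : M.PosDef) (hS : S.PosDef)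
    (h : ∀ x : ι → ℝ, 0 ≤ x ⬝ᵥ ((S - (hbar / 2) • M⁻¹) *ᵥ x))
    {z : ι → ℝ} (hz : (M *ᵥ z) ⬝ᵥ z ≤ hbar) :
    (S⁻¹ *ᵥ z) ⬝ᵥ z ≤ 2 := by
  have hMinv : (M⁻¹).PosDef := hM.inv
  set y := S⁻¹ *ᵥ z with hy
  have hSy : S *ᵥ y = z := by
    rw [hy, Matrix.mulVec_mulVec, Matrix.mul_nonsing_inv _ hS.det_pos.ne'.isUnit,
      Matrix.one_mulVec]
  set t := (S⁻¹ *ᵥ z) ⬝ᵥ z with ht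
  have hty : t = y ⬝ᵥ z := rfl
  have ht0 : 0 ≤ t := by
    rw [ht, dotProduct_comm]
    simpa using hS.inv.posSemidef.dotProduct_mulVec_nonneg z
  have h1 : (hbar / 2) * ((M⁻¹ *ᵥ y) ⬝ᵥ y) ≤ t := by
    have h0 := h y
    rw [Matrix.sub_mulVec, Matrix.smul_mulVec, dotProduct_sub, dotProduct_smul] at h0
    have e1 : y ⬝ᵥ (S *ᵥ y) = t := by rw [hSy, hty, dotProduct_comm]
    have e2 : y ⬝ᵥ (M⁻¹ *ᵥ y) = (M⁻¹ *ᵥ y) ⬝ᵥ y := dotProduct_comm _ _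
    rw [e1, e2] at h0
    simpa [smul_eq_mul] using h0
  have hMy0 : 0 ≤ (M⁻¹ *ᵥ y) ⬝ᵥ y := by
    have := hMinv.posSemidef.dotProduct_mulVec_nonneg y
    simpa [dotProduct_comm] using this
  have hMz0 : 0 ≤ (M *ᵥ z) ⬝ᵥ z := by
    have := hM.posSemidef.dotProduct_mulVec_nonneg z
    simpa [dotProduct_comm] using this
  have hMMy : M *ᵥ (M⁻¹ *ᵥ y) = y := by
    rw [Matrix.mulVec_mulVec, Matrix.mul_nonsing_inv _ hM.det_pos.ne'.isUnit, Matrix.one_mulVec]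
  have hcs := cs_psd hM.posSemidef z (M⁻¹ *ᵥ y)
  rw [hMMy] at hcs
  have hlhs : (M *ᵥ z) ⬝ᵥ (M⁻¹ *ᵥ y) = t := by
    rw [symm_dot (herm_toSymm hM.1), hMMy, hty]
  have hrhs : y ⬝ᵥ (M⁻¹ *ᵥ y) = (M⁻¹ *ᵥ y) ⬝ᵥ y := dotProduct_comm _ _
  rw [hlhs, hrhs] at hcs
  nlinarith [hcs, h1, hMy0, hMz0, hz, ht0, hhb]

lemma dot_block₁₁ {α β : Type*} [Fintype α] [Fintype β]
    (P : Matrix (α ⊕ β) (α ⊕ β) ℝ) (x : α → ℝ) :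
    Sum.elim x 0 ⬝ᵥ (P *ᵥ Sum.elim x 0) = x ⬝ᵥ (P.toBlocks₁₁ *ᵥ x) := by
  rw [← Matrix.fromBlocks_toBlocks P, Matrix.fromBlocks_mulVec, sumElim_dotProduct_sumElim]
  simp

lemma dot_block₂₂ {α β : Type*} [Fintype α] [Fintype β]
    (P : Matrix (α ⊕ β) (α ⊕ β) ℝ) (x : β → ℝ) :
    Sum.elim 0 x ⬝ᵥ (P *ᵥ Sum.elim 0 x) = x ⬝ᵥ (P.toBlocks₂₂ *ᵥ x) := by
  rw [← Matrix.fromBlocks_toBlocks P, Matrix.fromBlocks_mulVec, sumElim_dotProduct_sumElim]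
  simp

lemma elim_ne_zero_left {α β : Type*} {x : α → ℝ} (hx : x ≠ 0) :
    (Sum.elim x 0 : α ⊕ β → ℝ) ≠ 0 := by
  intro h
  apply hx
  funext i
  exact congrFun h (Sum.inl i)

lemma elim_ne_zero_right {α β : Type*} {x : β → ℝ} (hx : x ≠ 0) :
    (Sum.elim 0 x : α ⊕ β → ℝ) ≠ 0 := by
  intro h
  apply hx
  funext i
  exact congrFun h (Sum.inr i)

/-- A symplectic matrix is invertible. -/
lemma symplectic_isUnit {m : ℕ} {S : Matrix (PS m) (PS m) ℝ} (hS : IsSymplectic S) :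
    IsUnit S := by
  have hJJ : symplJ m * symplJ m = -1 := by
    rw [symplJ, Matrix.fromBlocks_multiply]
    simp [← Matrix.fromBlocks_one, Matrix.fromBlocks_neg]
  have hJdet : (symplJ m).det ≠ 0 := by
    have h1 : symplJ m * (-(symplJ m)) = 1 := by rw [mul_neg, hJJ, neg_neg]
    exact (Matrix.isUnit_det_of_right_inverse h1).ne_zero
  have hdet := congrArg Matrix.det hS
  rw [Matrix.det_mul, Matrix.det_mul, Matrix.det_transpose] at hdet
  have hSdet : S.det ≠ 0 := by
    intro h0
    rw [h0] at hdet
    simp at hdet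
    exact hJdet hdet.symm
  exact (Matrix.isUnit_iff_isUnit_det _).2 hSdet.isUnit

/-- `SᵀS` is positive definite for invertible `S`. -/
lemma tmul_posDef {ι : Type*} [Fintype ι] [DecidableEq ι] {S : Matrix ι ι ℝ}
    (hS : IsUnit S) : (Sᵀ * S).PosDef := by
  have hinj : Function.Injective S.mulVec := Matrix.mulVec_injective_iff_isUnit.2 hS
  refine Matrix.PosDef.of_dotProduct_mulVec_pos ?_ ?_
  · show (Sᵀ * S)ᴴ = Sᵀ * S
    rw [Matrix.conjTranspose_eq_transpose_of_trivial, Matrix.transpose_mul,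
      Matrix.transpose_transpose]
  · intro x hx
    have hx' : S *ᵥ x ≠ 0 := by
      intro h
      apply hx
      apply hinj
      simp [h, Matrix.mulVec_zero]
    have he : star x ⬝ᵥ ((Sᵀ * S) *ᵥ x) = (S *ᵥ x) ⬝ᵥ (S *ᵥ x) := by
      rw [star_trivial, ← Matrix.mulVec_mulVec, Matrix.dotProduct_mulVec,
        Matrix.vecMul_transpose]
    rw [he]
    rcases lt_or_eq_of_le (Finset.sum_nonneg fun i _ => mul_self_nonneg ((S *ᵥ x) i) :
        (0:ℝ) ≤ (S *ᵥ x) ⬝ᵥ (S *ᵥ x)) with h | h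
    · exact h
    · exact absurd (dotProduct_self_eq_zero.1 h.symm) hx'

/-- if `Σ - (hbar/2)((S_AᵀS_A)⁻¹ ⊕ (S_BᵀS_B)⁻¹) ≥ 0` for symplectic `S_A`, `S_B`
(which holds whenever the Gaussian state with covariance matrix `Σ` is separable), then the
covariance ellipsoids `Ω_A`, `Ω_B` of the reduced states contain the symplectic balls
`{z_A : ⟨S_AᵀS_A z_A, z_A⟩ ≤ hbar}` and `{z_B : ⟨S_BᵀS_B z_B, z_B⟩ ≤ hbar}`. -/
theorem statement6 (nA nB : ℕ) (hA : 0 < nA) (hB : 0 < nB) (hbar : ℝ) (hhb : 0 < hbar)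
    (Sig : Matrix (PS nA ⊕ PS nB) (PS nA ⊕ PS nB) ℝ) (hsym : Sig.IsSymm) (hpos : Sig.PosDef)
    (SA : Matrix (PS nA) (PS nA) ℝ) (SB : Matrix (PS nB) (PS nB) ℝ)
    (hSA : IsSymplectic SA) (hSB : IsSymplectic SB)
    (hsep : (Sig - (hbar / 2) •
        Matrix.fromBlocks (SAᵀ * SA)⁻¹ 0 0 (SBᵀ * SB)⁻¹).PosSemidef) :
    ({zA : PS nA → ℝ | ((SAᵀ * SA) *ᵥ zA) ⬝ᵥ zA ≤ hbar} ⊆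
        {zA : PS nA → ℝ | ((Sig.toBlocks₁₁)⁻¹ *ᵥ zA) ⬝ᵥ zA ≤ 2}) ∧
    ({zB : PS nB → ℝ | ((SBᵀ * SB) *ᵥ zB) ⬝ᵥ zB ≤ hbar} ⊆
        {zB : PS nB → ℝ | ((Sig.toBlocks₂₂)⁻¹ *ᵥ zB) ⬝ᵥ zB ≤ 2}) := by
  set P := Sig - (hbar / 2) • Matrix.fromBlocks (SAᵀ * SA)⁻¹ 0 0 (SBᵀ * SB)⁻¹ with hP
  have hMA : (SAᵀ * SA).PosDef := tmul_posDef (symplectic_isUnit hSA)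
  have hMB : (SBᵀ * SB).PosDef := tmul_posDef (symplectic_isUnit hSB)
  -- block identities
  have hP11 : P.toBlocks₁₁ = Sig.toBlocks₁₁ - (hbar / 2) • (SAᵀ * SA)⁻¹ := by
    ext i j
    simp [hP, Matrix.toBlocks₁₁, Matrix.fromBlocks]
  have hP22 : P.toBlocks₂₂ = Sig.toBlocks₂₂ - (hbar / 2) • (SBᵀ * SB)⁻¹ := by
    ext i j
    simp [hP, Matrix.toBlocks₂₂, Matrix.fromBlocks]
  -- Sig diagonal blocks positive definite
  have hSigA : (Sig.toBlocks₁₁).PosDef := by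
    refine Matrix.PosDef.of_dotProduct_mulVec_pos ?_ ?_
    · show (Sig.toBlocks₁₁)ᴴ = Sig.toBlocks₁₁
      ext i j
      simp only [Matrix.conjTranspose_apply, Matrix.toBlocks₁₁, Matrix.of_apply, star_trivial]
      exact (hsym.apply (Sum.inl j) (Sum.inl i)).symm
    · intro x hx
      have := hpos.dotProduct_mulVec_pos (elim_ne_zero_left (β := PS nB) hx)
      rwa [star_trivial, dot_block₁₁] at this
  have hSigB : (Sig.toBlocks₂₂).PosDef := by
    refine Matrix.PosDef.of_dotProduct_mulVec_pos ?_ ?_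
    · show (Sig.toBlocks₂₂)ᴴ = Sig.toBlocks₂₂
      ext i j
      simp only [Matrix.conjTranspose_apply, Matrix.toBlocks₂₂, Matrix.of_apply, star_trivial]
      exact (hsym.apply (Sum.inr j) (Sum.inr i)).symm
    · intro x hx
      have := hpos.dotProduct_mulVec_pos (elim_ne_zero_right (α := PS nA) hx)
      rwa [star_trivial, dot_block₂₂] at this
  -- restrictions of the separability hypothesis
  have hsepA : ∀ x : PS nA → ℝ,
      0 ≤ x ⬝ᵥ ((Sig.toBlocks₁₁ - (hbar / 2) • (SAᵀ * SA)⁻¹) *ᵥ x) := by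
    intro x
    have := hsep.dotProduct_mulVec_nonneg (Sum.elim x 0)
    rw [star_trivial, dot_block₁₁, hP11] at this
    exact this
  have hsepB : ∀ x : PS nB → ℝ,
      0 ≤ x ⬝ᵥ ((Sig.toBlocks₂₂ - (hbar / 2) • (SBᵀ * SB)⁻¹) *ᵥ x) := by
    intro x
    have := hsep.dotProduct_mulVec_nonneg (Sum.elim 0 x)
    rw [star_trivial, dot_block₂₂, hP22] at this
    exact this
  constructor
  · intro z hz
    exact key_est hhb hMA hSigA hsepA hz
  · intro z hz
    exact key_est hhb hMB hSigB hsepB hz
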